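/- The response-time tail function Pr(R ≥ d) = (e^{-(μf-λ)d} - w₁(μf-λ)e^{-d/w₁}) / (1 - w₁(μf-λ)) takes values in [0,1] for every d ≥ 0, whenever 0 < w₁(μf-λ) < 1. -/
import Mathlib


/-- When `0 < w₁(μf-λ) < 1`, the response-time tail formula lies in `[0,1]`
for every `d ≥ 0`. -/
theorem tail_mem_Icc (lam mu f w₁ : ℝ)
    (hlam : 0 < lam) (hmu : 0 < mu) (hf0 : 0 < f) (hf1 : f ≤ 1)
    (hstab : lam < mu * f) (hw : 0 < w₁) (hwa : w₁ * (mu * f - lam) < 1) :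
    ∀ d : ℝ, 0 ≤ d →
      (Real.exp (-(mu * f - lam) * d) - w₁ * (mu * f - lam) * Real.exp (-d / w₁)) /
        (1 - w₁ * (mu * f - lam)) ∈ Set.Icc (0 : ℝ) 1 := by
  intro d hd
  set a := mu * f - lam with ha_def
  have ha : 0 < a := sub_pos.mpr hstab
  have hc : 0 < w₁ * a := mul_pos hw ha
  have hden : 0 < 1 - w₁ * a := by linarith
  -- key exponent comparison for any x ≥ 0
  have hexp_le : ∀ x : ℝ, 0 ≤ x → Real.exp (-x / w₁) ≤ Real.exp (-a * x) := by
    intro x hx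
    apply Real.exp_le_exp.mpr
    rw [div_le_iff₀ hw]  -- -x/w₁ ≤ -a*x ↔ -x ≤ -a*x*w₁
    nlinarith
  have hlow : 0 ≤ Real.exp (-a * d) - w₁ * a * Real.exp (-d / w₁) := by
    have h1 := hexp_le d hd
    have h2 := Real.exp_pos (-a * d)
    nlinarith [mul_le_mul_of_nonneg_left h1 hc.le, mul_pos hden h2]
  have hupp : Real.exp (-a * d) - w₁ * a * Real.exp (-d / w₁) ≤ 1 - w₁ * a := by
    have hmono : AntitoneOn (fun x : ℝ =>
        Real.exp (-a * x) - w₁ * a * Real.exp (-x / w₁)) (Set.Ici 0) := by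
      apply antitoneOn_of_deriv_nonpos (convex_Ici 0)
      · fun_prop
      · intro x _
        have h1 : HasDerivAt (fun x : ℝ => -a * x) (-a) x := by
          simpa using (hasDerivAt_id x).const_mul (-a)
        have h2 : HasDerivAt (fun x : ℝ => -x / w₁) (-1 / w₁) x := by
          have : HasDerivAt (fun x : ℝ => x * (-1 / w₁)) (-1 / w₁) x := by
            simpa using (hasDerivAt_id x).mul_const (-1 / w₁)
          convert this using 2 with y
          ring
        have hD : HasDerivAt (fun x : ℝ =>
            Real.exp (-a * x) - w₁ * a * Real.exp (-x / w₁))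
            (Real.exp (-a * x) * (-a) - w₁ * a * (Real.exp (-x / w₁) * (-1 / w₁))) x :=
          (h1.exp).sub ((h2.exp).const_mul (w₁ * a))
        exact hD.differentiableAt.differentiableWithinAt
      · intro x hx
        have hx0 : (0 : ℝ) ≤ x := le_of_lt (by simpa using hx)
        have h1 : HasDerivAt (fun x : ℝ => -a * x) (-a) x := by
          simpa using (hasDerivAt_id x).const_mul (-a)
        have h2 : HasDerivAt (fun x : ℝ => -x / w₁) (-1 / w₁) x := by
          have : HasDerivAt (fun x : ℝ => x * (-1 / w₁)) (-1 / w₁) x := by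
            simpa using (hasDerivAt_id x).mul_const (-1 / w₁)
          convert this using 2 with y
          ring
        have hD : HasDerivAt (fun x : ℝ =>
            Real.exp (-a * x) - w₁ * a * Real.exp (-x / w₁))
            (Real.exp (-a * x) * (-a) - w₁ * a * (Real.exp (-x / w₁) * (-1 / w₁))) x :=
          (h1.exp).sub ((h2.exp).const_mul (w₁ * a))
        rw [hD.deriv]
        have hle := hexp_le x hx0
        have hwne : w₁ ≠ 0 := ne_of_gt hw
        have : w₁ * a * (Real.exp (-x / w₁) * (-1 / w₁)) = -a * Real.exp (-x / w₁) := by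
          field_simp
        rw [this]
        nlinarith [Real.exp_pos (-a * x), Real.exp_pos (-x / w₁)]
    have h := hmono (Set.self_mem_Ici) (Set.mem_Ici.mpr hd) hd
    simpa using h
  constructor
  · positivity
  · rw [div_le_one hden]
    linarith
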